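/- For all ordinals α and ρ and every finite set Δ of closed pseudo-Π¹₁ formulas: if ⊢^α_{ρ+1} Δ, then ⊢^{ω^α}_ρ Δ. (Cut-elimination: one exponential in the height reduces the cut rank by one.) -/

import Mathlib

/-!
Induction on the derivation. Every inference except a cut of rank exactly `ρ` is kept, with
heights `β ↦ ω^β`. A cut on `F` with `rk F = ρ`, whose premises now have heights `ω^α₁` and
`ω^α₂`, is replaced by a cut-rank-`ρ` derivation of height at most `ω^α₁ + ω^α₂` or
`ω^α₂ + ω^α₁`, which is still below `ω^α` because `ω^α` is additively principal.

To remove such a cut, a false arithmetic literal is simply erased from its derivation. For a cut on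
`t ∈ X`, follow the derivation of `t ∉ X` up to the axioms that use `t ∉ X` together with some
`s ∈ X`, `s = t` in `ℕ`, and put there the derivation of `t ∈ X` with `t` replaced by `s`. If `F`
is of `∨`-type (otherwise swap `F` and `¬F`), follow the derivation of `F` up to the inferences
that introduce `F` from a disjunct `C`, and replace each by a cut on `C`, of rank `< ρ`, against
the derivation of `¬F` inverted to `¬C`.
-/

universe u

open Ordinal

/-- Terms of first-order arithmetic in the signature `(0, 1, +, ×)`, with (at most) `n`
free variables, in de Bruijn representation. -/
inductive PTerm : ℕ → Type
  | var {n} : Fin n → PTerm n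
  | zero {n} : PTerm n
  | one {n} : PTerm n
  | add {n} : PTerm n → PTerm n → PTerm n
  | mul {n} : PTerm n → PTerm n → PTerm n
  deriving DecidableEq

/-- Pseudo-Π¹₁ formulas (with at most `n` free number variables) in negation normal form:
built from literals of the signature `(0,1,+,×,=)` and the atomic formulas `t ∈ X`, `t ∉ X`
for the single fixed set variable `X`, by `∧`, `∨`, `∀x`, `∃x` (de Bruijn representation). -/
inductive PForm : ℕ → Type
  | eq {n} : PTerm n → PTerm n → PForm n
  | ne {n} : PTerm n → PTerm n → PForm n
  | mem {n} : PTerm n → PForm n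
  | nmem {n} : PTerm n → PForm n
  | and {n} : PForm n → PForm n → PForm n
  | or {n} : PForm n → PForm n → PForm n
  | all {n} : PForm (n + 1) → PForm n
  | ex {n} : PForm (n + 1) → PForm n
  deriving DecidableEq

namespace PTerm

/-- Evaluation of a term in the standard model `ℕ` under the environment `e`. -/
def val {n} (e : Fin n → ℕ) : PTerm n → ℕ
  | var i => e i
  | zero => 0
  | one => 1
  | add s t => s.val e + t.val e
  | mul s t => s.val e * t.val e

/-- The value of a closed term in the standard model. -/
def val0 (t : PTerm 0) : ℕ := t.val Fin.elim0

/-- Simultaneous substitution in terms. -/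
def subst {m n} (σ : Fin m → PTerm n) : PTerm m → PTerm n
  | var i => σ i
  | zero => zero
  | one => one
  | add s t => add (s.subst σ) (t.subst σ)
  | mul s t => mul (s.subst σ) (t.subst σ)

/-- Shift all free variables up by one. -/
def shift {n} (t : PTerm n) : PTerm (n + 1) := t.subst fun i => var i.succ

/-- The numeral `k̄` denoting the natural number `k`. -/
def numeral {n} : ℕ → PTerm n
  | 0 => zero
  | k + 1 => add (numeral k) one

end PTerm

namespace PForm

/-- Negation, defined by De Morgan duality. -/
def neg {n} : PForm n → PForm n
  | eq s t => ne s t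
  | ne s t => eq s t
  | mem t => nmem t
  | nmem t => mem t
  | and A B => or A.neg B.neg
  | or A B => and A.neg B.neg
  | all A => ex A.neg
  | ex A => all A.neg

/-- The rank of a formula: the number of logical symbols occurring in it. -/
def rk {n} : PForm n → ℕ
  | eq _ _ => 0
  | ne _ _ => 0
  | mem _ => 0
  | nmem _ => 0
  | and A B => A.rk + B.rk + 1
  | or A B => A.rk + B.rk + 1
  | all A => A.rk + 1
  | ex A => A.rk + 1

/-- Lift a substitution under a binder. -/
def liftSubst {m n} (σ : Fin m → PTerm n) : Fin (m + 1) → PTerm (n + 1) :=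
  Fin.cases (PTerm.var 0) fun i => (σ i).shift

/-- Simultaneous substitution in formulas. -/
def subst : {m n : ℕ} → (Fin m → PTerm n) → PForm m → PForm n
  | _, _, σ, eq s t => eq (s.subst σ) (t.subst σ)
  | _, _, σ, ne s t => ne (s.subst σ) (t.subst σ)
  | _, _, σ, mem t => mem (t.subst σ)
  | _, _, σ, nmem t => nmem (t.subst σ)
  | _, _, σ, and A B => and (A.subst σ) (B.subst σ)
  | _, _, σ, or A B => or (A.subst σ) (B.subst σ)
  | _, _, σ, all A => all (A.subst (liftSubst σ))
  | _, _, σ, ex A => ex (A.subst (liftSubst σ))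

/-- `A.inst k` is `A(k̄)`: the result of substituting the numeral `k̄` for the free
variable of `A`. -/
def inst (A : PForm 1) (k : ℕ) : PForm 0 := A.subst fun _ => PTerm.numeral k

/-- Truth of a pseudo-Π¹₁ formula in the standard model `ℕ`, with the set variable `X`
interpreted as `S` and the environment `e`. -/
def Sat (S : Set ℕ) : {n : ℕ} → (Fin n → ℕ) → PForm n → Prop
  | _, e, eq s t => s.val e = t.val e
  | _, e, ne s t => s.val e ≠ t.val e
  | _, e, mem t => t.val e ∈ S
  | _, e, nmem t => t.val e ∉ S
  | _, e, and A B => A.Sat S e ∧ B.Sat S e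
  | _, e, or A B => A.Sat S e ∨ B.Sat S e
  | _, e, all A => ∀ k : ℕ, A.Sat S (Fin.cons k e)
  | _, e, ex A => ∃ k : ℕ, A.Sat S (Fin.cons k e)

end PForm

/-- The infinitary (ω-logic) derivability relation `⊢^α_ρ Δ` for finite sets `Δ` of closed
pseudo-Π¹₁ formulas: derivations of height `α` with all cut formulas of rank `< ρ`. -/
inductive Der : Ordinal.{u} → Ordinal.{u} → Finset (PForm 0) → Prop
  /-- (Ax): `Δ` contains a true closed literal of the first-order signature, or contains
  `s ∉ X` and `t ∈ X` for closed terms `s, t` with the same value. -/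
  | ax {α ρ Δ} :
      ((∃ s t : PTerm 0, (PForm.eq s t ∈ Δ ∧ s.val0 = t.val0) ∨
          (PForm.ne s t ∈ Δ ∧ s.val0 ≠ t.val0)) ∨
        (∃ s t : PTerm 0, PForm.nmem s ∈ Δ ∧ PForm.mem t ∈ Δ ∧ s.val0 = t.val0)) →
      Der α ρ Δ
  /-- (∧) -/
  | and {α α₁ α₂ ρ Δ} {A₁ A₂ : PForm 0} : Der α₁ ρ (insert A₁ Δ) → Der α₂ ρ (insert A₂ Δ) →
      α₁ < α → α₂ < α → Der α ρ (insert (PForm.and A₁ A₂) Δ)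
  /-- (∨), left disjunct -/
  | orl {α α₀ ρ Δ} {A₁ A₂ : PForm 0} : Der α₀ ρ (insert A₁ Δ) → α₀ < α →
      Der α ρ (insert (PForm.or A₁ A₂) Δ)
  /-- (∨), right disjunct -/
  | orr {α α₀ ρ Δ} {A₁ A₂ : PForm 0} : Der α₀ ρ (insert A₂ Δ) → α₀ < α →
      Der α ρ (insert (PForm.or A₁ A₂) Δ)
  /-- (ω) -/
  | all {α ρ Δ} {A : PForm 1} (β : ℕ → Ordinal.{u}) : (∀ k : ℕ, β k < α) →
      (∀ k : ℕ, Der (β k) ρ (insert (A.inst k) Δ)) → Der α ρ (insert (PForm.all A) Δ)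
  /-- (∃) -/
  | ex {α α₀ ρ Δ} {A : PForm 1} (k : ℕ) : Der α₀ ρ (insert (A.inst k) Δ) → α₀ < α →
      Der α ρ (insert (PForm.ex A) Δ)
  /-- (Cut) -/
  | cut {α α₁ α₂ ρ Δ} {F : PForm 0} : Der α₁ ρ (insert F Δ) → Der α₂ ρ (insert F.neg Δ) →
      α₁ < α → α₂ < α → (F.rk : Ordinal) < ρ → Der α ρ Δ

open Finset

namespace PForm

@[simp] lemma neg_neg {n} (A : PForm n) : A.neg.neg = A := by
  induction A <;> simp [neg, *]

@[simp] lemma rk_neg {n} (A : PForm n) : A.neg.rk = A.rk := by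
  induction A <;> simp [neg, rk, *]

lemma rk_subst {m n} (σ : Fin m → PTerm n) (A : PForm m) : (A.subst σ).rk = A.rk := by
  induction A generalizing n <;> simp [subst, rk, *]

lemma neg_subst {m n} (σ : Fin m → PTerm n) (A : PForm m) :
    (A.subst σ).neg = A.neg.subst σ := by
  induction A generalizing n <;> simp [subst, neg, *]

lemma rk_inst (A : PForm 1) (k : ℕ) : (A.inst k).rk = A.rk := rk_subst _ A

lemma neg_inst (A : PForm 1) (k : ℕ) : (A.inst k).neg = A.neg.inst k := neg_subst _ A

/-- `∀x A` counts as the infinite conjunction of the `A(k̄)`, so that the `∧`- and `ω`-rules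
with principal formula `c` have one premise `Δ, C` for each `C` with `IsConjunct c C`. -/
inductive IsConjunct : PForm 0 → PForm 0 → Prop
  | and_left (A B : PForm 0) : IsConjunct (and A B) A
  | and_right (A B : PForm 0) : IsConjunct (and A B) B
  | all (A : PForm 1) (k : ℕ) : IsConjunct (all A) (A.inst k)

inductive IsDisjunct : PForm 0 → PForm 0 → Prop
  | or_left (A B : PForm 0) : IsDisjunct (or A B) A
  | or_right (A B : PForm 0) : IsDisjunct (or A B) B
  | ex (A : PForm 1) (k : ℕ) : IsDisjunct (ex A) (A.inst k)

variable {c C D : PForm 0}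

lemma IsConjunct.rk_lt (h : IsConjunct c C) : C.rk < c.rk := by
  cases h <;> simp only [rk, rk_inst] <;> omega

lemma IsDisjunct.rk_lt (h : IsDisjunct c C) : C.rk < c.rk := by
  cases h <;> simp only [rk, rk_inst] <;> omega

lemma IsDisjunct.neg (h : IsDisjunct c C) : IsConjunct c.neg C.neg := by
  cases h with
  | or_left A B => exact .and_left _ _
  | or_right A B => exact .and_right _ _
  | ex A k => rw [neg_inst]; exact .all _ _

lemma IsDisjunct.not_isConjunct (h : IsDisjunct c C) : ¬ IsConjunct c D := by
  cases h <;> rintro ⟨⟩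

end PForm

open PForm

def IsAxiom (Δ : Finset (PForm 0)) : Prop :=
  (∃ s t : PTerm 0, (eq s t ∈ Δ ∧ s.val0 = t.val0) ∨ (ne s t ∈ Δ ∧ s.val0 ≠ t.val0)) ∨
    (∃ s t : PTerm 0, nmem s ∈ Δ ∧ mem t ∈ Δ ∧ s.val0 = t.val0)

namespace IsAxiom

variable {Δ Θ : Finset (PForm 0)} {c : PForm 0} {s t : PTerm 0}

lemma mono (h : IsAxiom Δ) (hΔ : Δ ⊆ Θ) : IsAxiom Θ := by
  rcases h with ⟨s, t, ⟨h₁, h₂⟩ | ⟨h₁, h₂⟩⟩ | ⟨s, t, h₁, h₂, h₃⟩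
  exacts [.inl ⟨s, t, .inl ⟨hΔ h₁, h₂⟩⟩, .inl ⟨s, t, .inr ⟨hΔ h₁, h₂⟩⟩,
    .inr ⟨s, t, hΔ h₁, hΔ h₂, h₃⟩]

lemma of_insert_of_rk_pos (h : IsAxiom (insert c Θ)) (hc : 0 < c.rk) : IsAxiom Θ := by
  unfold IsAxiom at h ⊢
  grind [rk]

lemma of_insert_of_false (h : IsAxiom (insert c Θ)) (hc : ∀ S, ¬ c.Sat S Fin.elim0) :
    IsAxiom Θ := by
  -- `t ∉ X` holds for `X = ∅` and `t ∈ X` for `X = ℕ`, so `c` is neither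
  have h₀ := hc ∅
  have h₁ := hc Set.univ
  unfold IsAxiom at h ⊢
  grind [Sat, PTerm.val0]

lemma of_insert_mem (h : IsAxiom (insert (mem t) Θ)) (hs : mem s ∈ Θ) (hst : s.val0 = t.val0) :
    IsAxiom Θ := by
  unfold IsAxiom at h ⊢
  grind

lemma of_insert_nmem (h : IsAxiom (insert (nmem t) Θ)) :
    IsAxiom Θ ∨ ∃ s, mem s ∈ Θ ∧ s.val0 = t.val0 := by
  unfold IsAxiom at h ⊢
  grind

end IsAxiom

namespace Der

variable {ρ : Ordinal.{u}}

theorem conj {α : Ordinal.{u}} {Δ : Finset (PForm 0)} {P : PForm 0} (hP : ∃ C, P.IsConjunct C)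
    (h : ∀ C, P.IsConjunct C → ∃ β < α, Der β ρ (insert C Δ)) : Der α ρ (insert P Δ) := by
  cases P with
  | and A B =>
    obtain ⟨β₁, hβ₁, d₁⟩ := h A (.and_left A B)
    obtain ⟨β₂, hβ₂, d₂⟩ := h B (.and_right A B)
    exact Der.and d₁ d₂ hβ₁ hβ₂
  | all A =>
    choose β hβ d using fun k => h _ (.all A k)
    exact Der.all β hβ d
  | _ => obtain ⟨_, ⟨⟩⟩ := hP

theorem disj {α β : Ordinal.{u}} {Δ : Finset (PForm 0)} {P C : PForm 0} (hC : P.IsDisjunct C)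
    (d : Der β ρ (insert C Δ)) (hβ : β < α) : Der α ρ (insert P Δ) := by
  cases hC with
  | or_left => exact Der.orl d hβ
  | or_right => exact Der.orr d hβ
  | ex A k => exact Der.ex k d hβ

theorem induction {motive : Ordinal.{u} → Finset (PForm 0) → Prop}
    (ax : ∀ {α Δ}, IsAxiom Δ → motive α Δ)
    (conj : ∀ {α Δ P}, (∃ C, P.IsConjunct C) →
      (∀ C, P.IsConjunct C → ∃ β < α, motive β (insert C Δ)) → motive α (insert P Δ))
    (disj : ∀ {α β Δ P C}, P.IsDisjunct C → β < α → motive β (insert C Δ) →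
      motive α (insert P Δ))
    (cut : ∀ {α β₁ β₂ Δ F}, β₁ < α → β₂ < α → (F.rk : Ordinal) < ρ →
      motive β₁ (insert F Δ) → motive β₂ (insert F.neg Δ) → motive α Δ) :
    ∀ {α : Ordinal.{u}} {Δ : Finset (PForm 0)}, Der α ρ Δ → motive α Δ
  | _, _, .ax h => ax h
  | _, _, .and d₁ d₂ h₁ h₂ => conj ⟨_, .and_left _ _⟩ fun C hC => by
    cases hC
    exacts [⟨_, h₁, induction ax conj disj cut d₁⟩, ⟨_, h₂, induction ax conj disj cut d₂⟩]
  | _, _, .orl d h => disj (.or_left _ _) h (induction ax conj disj cut d)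
  | _, _, .orr d h => disj (.or_right _ _) h (induction ax conj disj cut d)
  | _, _, .all β hβ d => conj ⟨_, .all _ 0⟩ fun C hC => by
    cases hC
    exact ⟨_, hβ _, induction ax conj disj cut (d _)⟩
  | _, _, .ex k d h => disj (.ex _ k) h (induction ax conj disj cut d)
  | _, _, .cut d₁ d₂ h₁ h₂ hrk =>
    cut h₁ h₂ hrk (induction ax conj disj cut d₁) (induction ax conj disj cut d₂)

theorem weaken {α α' : Ordinal.{u}} {Δ Θ : Finset (PForm 0)} (h : Der α ρ Δ) (hα : α ≤ α')
    (hΔ : Δ ⊆ Θ) : Der α' ρ Θ := by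
  refine Der.induction (motive := fun α Δ => ∀ {α' Θ}, α ≤ α' → Δ ⊆ Θ → Der α' ρ Θ)
    ?ax ?conj ?disj ?cut h hα hΔ
  case ax => exact fun hax _ _ _ hΔ => Der.ax (hax.mono hΔ)
  case conj =>
    intro α Δ P hP ih α' Θ hα hΔ
    rw [← insert_eq_of_mem (hΔ (mem_insert_self P Δ))]
    refine Der.conj hP fun C hC => ?_
    obtain ⟨β, hβ, ih⟩ := ih C hC
    exact ⟨β, hβ.trans_le hα, ih le_rfl (insert_subset_insert C ((subset_insert P Δ).trans hΔ))⟩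
  case disj =>
    intro α β Δ P C hC hβ ih α' Θ hα hΔ
    rw [← insert_eq_of_mem (hΔ (mem_insert_self P Δ))]
    exact Der.disj hC (ih le_rfl (insert_subset_insert C ((subset_insert P Δ).trans hΔ)))
      (hβ.trans_le hα)
  case cut =>
    intro α β₁ β₂ Δ F h₁ h₂ hrk ih₁ ih₂ α' Θ hα hΔ
    exact Der.cut (ih₁ le_rfl (insert_subset_insert F hΔ)) (ih₂ le_rfl (insert_subset_insert _ hΔ))
      (h₁.trans_le hα) (h₂.trans_le hα) hrk

/-- To erase `c` from the end sequent of a derivation while transforming its height by `f`, it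
suffices to treat the axioms and the inferences whose principal formula is this occurrence of `c`:
every other inference is repeated with `c` erased from its premises. -/
theorem elim {c : PForm 0} {Θ₀ : Finset (PForm 0)} {f : Ordinal.{u} → Ordinal.{u}}
    (hf : StrictMono f)
    (ax : ∀ {α Θ}, Θ₀ ⊆ Θ → IsAxiom (insert c Θ) → Der (f α) ρ Θ)
    (conj : ∀ {α Θ}, Θ₀ ⊆ Θ → (∃ C, c.IsConjunct C) →
      (∀ C, c.IsConjunct C → ∃ β < α, Der (f β) ρ (insert C Θ)) → Der (f α) ρ Θ)
    (disj : ∀ {α β Θ C}, Θ₀ ⊆ Θ → c.IsDisjunct C → β < α → Der (f β) ρ (insert C Θ) →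
      Der (f α) ρ Θ)
    {α : Ordinal.{u}} (h : Der α ρ (insert c Θ₀)) : Der (f α) ρ Θ₀ := by
  have extend : ∀ {Δ Θ : Finset (PForm 0)} (C : PForm 0), Δ ⊆ insert c Θ →
      insert C Δ ⊆ insert c (insert C Θ) := fun C hΔ => by
    rw [insert_comm]
    exact insert_subset_insert C hΔ
  have principal_or_mem : ∀ {P : PForm 0} {Δ Θ : Finset (PForm 0)}, insert P Δ ⊆ insert c Θ →
      P = c ∨ P ∈ Θ := fun hΔ => mem_insert.mp (hΔ (mem_insert_self _ _))
  refine Der.induction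
    (motive := fun α Δ => ∀ {Θ}, Θ₀ ⊆ Θ → Δ ⊆ insert c Θ → Der (f α) ρ Θ)
    ?ax ?conj ?disj ?cut h subset_rfl subset_rfl
  case ax => exact fun hax _ hΘ hΔ => ax hΘ (hax.mono hΔ)
  case conj =>
    intro α Δ P hP ih Θ hΘ hΔ
    have prem : ∀ C, P.IsConjunct C → ∃ β < α, Der (f β) ρ (insert C Θ) := fun C hC => by
      obtain ⟨β, hβ, ih⟩ := ih C hC
      exact ⟨β, hβ, ih (hΘ.trans (subset_insert C Θ)) (extend C ((subset_insert P Δ).trans hΔ))⟩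
    obtain rfl | hPΘ := principal_or_mem hΔ
    · exact conj hΘ hP prem
    · rw [← insert_eq_of_mem hPΘ]
      exact Der.conj hP fun C hC =>
        let ⟨β, hβ, d⟩ := prem C hC
        ⟨f β, hf hβ, d⟩
  case disj =>
    intro α β Δ P C hC hβ ih Θ hΘ hΔ
    have prem : Der (f β) ρ (insert C Θ) :=
      ih (hΘ.trans (subset_insert C Θ)) (extend C ((subset_insert P Δ).trans hΔ))
    obtain rfl | hPΘ := principal_or_mem hΔ
    · exact disj hΘ hC hβ prem
    · rw [← insert_eq_of_mem hPΘ]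
      exact Der.disj hC prem (hf hβ)
  case cut =>
    intro α β₁ β₂ Δ F h₁ h₂ hrk ih₁ ih₂ Θ hΘ hΔ
    exact Der.cut (ih₁ (hΘ.trans (subset_insert F Θ)) (extend F hΔ))
      (ih₂ (hΘ.trans (subset_insert _ Θ)) (extend _ hΔ)) (hf h₁) (hf h₂) hrk

theorem elim_literal {c : PForm 0} {Θ₀ : Finset (PForm 0)} {f : Ordinal.{u} → Ordinal.{u}}
    (hf : StrictMono f) (hc : c.rk = 0)
    (ax : ∀ {α Θ}, Θ₀ ⊆ Θ → IsAxiom (insert c Θ) → Der (f α) ρ Θ)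
    {α : Ordinal.{u}} (h : Der α ρ (insert c Θ₀)) : Der (f α) ρ Θ₀ :=
  elim hf ax (fun _ ⟨_, hC⟩ _ => absurd hC.rk_lt (by omega))
    (fun _ hC _ _ => absurd hC.rk_lt (by omega)) h

variable {α α₁ α₂ : Ordinal.{u}} {Δ : Finset (PForm 0)}

theorem of_insert_false {c : PForm 0} (hc₀ : c.rk = 0) (hc : ∀ S, ¬ c.Sat S Fin.elim0)
    (h : Der α ρ (insert c Δ)) : Der α ρ Δ :=
  elim_literal (f := id) strictMono_id hc₀ (fun _ hax => Der.ax (hax.of_insert_of_false hc)) h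

theorem of_insert_mem {s t : PTerm 0} (hst : s.val0 = t.val0) (hs : mem s ∈ Δ)
    (h : Der α ρ (insert (mem t) Δ)) : Der α ρ Δ :=
  elim_literal (f := id) strictMono_id rfl
    (fun hΘ hax => Der.ax (hax.of_insert_mem (hΘ hs) hst)) h

theorem invert {c C : PForm 0} (hC : c.IsConjunct C) (h : Der α ρ (insert c Δ)) :
    Der α ρ (insert C Δ) := by
  refine elim (f := id) strictMono_id
    (fun _ hax => Der.ax (hax.of_insert_of_rk_pos (pos_of_gt hC.rk_lt)))
    (fun hΘ _ prem => ?_) (fun _ hD => absurd hC hD.not_isConjunct)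
    (h.weaken le_rfl (insert_subset_insert c (subset_insert C Δ)))
  obtain ⟨β, hβ, d⟩ := prem C hC
  exact d.weaken hβ.le (insert_subset (hΘ (mem_insert_self C Δ)) subset_rfl)

theorem cut_admissible_mem {t : PTerm 0} (d₁ : Der α₁ ρ (insert (mem t) Δ))
    (d₂ : Der α₂ ρ (insert (nmem t) Δ)) : Der (α₁ + α₂) ρ Δ := by
  refine elim_literal (f := (α₁ + ·)) add_right_strictMono rfl (fun {β Θ} hΘ hax => ?_) d₂
  obtain hax | ⟨s, hs, hst⟩ := hax.of_insert_nmem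
  · exact Der.ax hax
  · exact ((d₁.weaken le_rfl (insert_subset_insert _ hΘ)).of_insert_mem hst hs).weaken
      le_self_add subset_rfl

theorem cut_admissible_of_isDisjunct {c C₀ : PForm 0} (hc : c.IsDisjunct C₀)
    (hρ : (c.rk : Ordinal) ≤ ρ) (d₁ : Der α₁ ρ (insert c Δ)) (d₂ : Der α₂ ρ (insert c.neg Δ)) :
    Der (α₂ + α₁) ρ Δ := by
  refine elim (f := (α₂ + ·)) add_right_strictMono
    (fun _ hax => Der.ax (hax.of_insert_of_rk_pos (pos_of_gt hc.rk_lt)))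
    (fun _ ⟨_, hD⟩ _ => absurd hD hc.not_isConjunct) (fun {β γ Θ C} hΘ hC hγ d => ?_) d₁
  have d₂' : Der α₂ ρ (insert C.neg Θ) :=
    (d₂.weaken le_rfl (insert_subset_insert _ hΘ)).invert hC.neg
  exact Der.cut d d₂' (add_lt_add_right hγ α₂) (lt_add_of_pos_right α₂ (pos_of_gt hγ))
    ((Nat.cast_lt.mpr hC.rk_lt).trans_le hρ)

theorem cut_admissible {F : PForm 0} (hF : (F.rk : Ordinal) ≤ ρ) (d₁ : Der α₁ ρ (insert F Δ))
    (d₂ : Der α₂ ρ (insert F.neg Δ)) : Der (max (α₁ + α₂) (α₂ + α₁)) ρ Δ := by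
  have h₁₂ : α₁ + α₂ ≤ max (α₁ + α₂) (α₂ + α₁) := le_max_left _ _
  have h₂₁ : α₂ + α₁ ≤ max (α₁ + α₂) (α₂ + α₁) := le_max_right _ _
  have hF' : (F.neg.rk : Ordinal) ≤ ρ := by rwa [rk_neg]
  have d₁' : Der α₁ ρ (insert F.neg.neg Δ) := by rwa [PForm.neg_neg]
  cases F with
  | eq s t =>
    by_cases hst : s.val0 = t.val0
    · exact (of_insert_false (c := ne s t) rfl (fun _ h => h hst) d₂).weaken
        (le_add_self.trans h₁₂) subset_rfl
    · exact (of_insert_false (c := eq s t) rfl (fun _ => hst) d₁).weaken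
        (le_self_add.trans h₁₂) subset_rfl
  | ne s t =>
    by_cases hst : s.val0 = t.val0
    · exact (of_insert_false (c := ne s t) rfl (fun _ h => h hst) d₁).weaken
        (le_self_add.trans h₁₂) subset_rfl
    · exact (of_insert_false (c := eq s t) rfl (fun _ => hst) d₂).weaken
        (le_add_self.trans h₁₂) subset_rfl
  | mem t => exact (cut_admissible_mem d₁ d₂).weaken h₁₂ subset_rfl
  | nmem t => exact (cut_admissible_mem d₂ d₁).weaken h₂₁ subset_rfl
  | or A B => exact (cut_admissible_of_isDisjunct (.or_left A B) hF d₁ d₂).weaken h₂₁ subset_rfl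
  | ex A => exact (cut_admissible_of_isDisjunct (.ex A 0) hF d₁ d₂).weaken h₂₁ subset_rfl
  | and A B =>
    exact (cut_admissible_of_isDisjunct (.or_left _ _) hF' d₂ d₁').weaken h₁₂ subset_rfl
  | all A => exact (cut_admissible_of_isDisjunct (.ex _ 0) hF' d₂ d₁').weaken h₁₂ subset_rfl

end Der

/-- cut elimination, Theorem 4.10; Pohlers, Theorem 2.1.2.9.
For all ordinals `α`, `ρ` and every finite set `Δ` of closed pseudo-Π¹₁ formulas:
if `⊢^α_{ρ+1} Δ`, then `⊢^{ω^α}_ρ Δ`. -/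
theorem cut_elimination (α ρ : Ordinal) (Δ : Finset (PForm 0)) (h : Der α (ρ + 1) Δ) :
    Der (omega0 ^ α) ρ Δ := by
  have opow_lt : ∀ {β γ : Ordinal}, β < γ → ω ^ β < ω ^ γ :=
    (opow_lt_opow_iff_right one_lt_omega0).mpr
  refine Der.induction (motive := fun α Δ => Der (ω ^ α) ρ Δ) Der.ax ?conj ?disj ?cut h
  case conj =>
    intro α Δ P hP ih
    exact Der.conj hP fun C hC =>
      let ⟨β, hβ, d⟩ := ih C hC
      ⟨ω ^ β, opow_lt hβ, d⟩
  case disj => exact fun hC hβ d => Der.disj hC d (opow_lt hβ)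
  case cut =>
    intro α β₁ β₂ Δ F h₁ h₂ hrk d₁ d₂
    by_cases hF : (F.rk : Ordinal) < ρ
    · exact Der.cut d₁ d₂ (opow_lt h₁) (opow_lt h₂) hF
    · have sum_lt : ∀ {γ₁ γ₂}, γ₁ < α → γ₂ < α → ω ^ γ₁ + ω ^ γ₂ < ω ^ α := fun h₁ h₂ =>
        isPrincipal_add_omega0_opow α (opow_lt h₁) (opow_lt h₂)
      exact (Der.cut_admissible (Order.lt_add_one_iff.mp hrk) d₁ d₂).weaken
        (max_lt (sum_lt h₁ h₂) (sum_lt h₂ h₁)).le subset_rfl
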